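/- Every real number x admits a non-adjacent signed digit expansion, i.e. there exists a : ℤ → ℤ with a n ∈ {-1, 0, 1} for all n, a n = 0 for all n ≤ -N for some N ∈ ℕ, x = ∑_{n ∈ ℤ} (a n) · 2^(-n), and for every n ∈ ℤ not both a n and a (n+1) are nonzero. -/
import Mathlib


/-- `a : ℤ → ℤ` is a signed digit expansion of the real number `x`. -/
def IsSignedDigitExpansion (a : ℤ → ℤ) (x : ℝ) : Prop :=
  (∀ n : ℤ, a n = -1 ∨ a n = 0 ∨ a n = 1) ∧
  (∃ N : ℕ, ∀ n : ℤ, n ≤ -(N : ℤ) → a n = 0) ∧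
  Summable (fun n : ℤ => (a n : ℝ) * (2 : ℝ) ^ (-n)) ∧
  x = ∑' n : ℤ, (a n : ℝ) * (2 : ℝ) ^ (-n)

/-- The expansion is non-adjacent: no two consecutive nonzero digits. -/
def NonAdjacent (a : ℤ → ℤ) : Prop := ∀ n : ℤ, a n = 0 ∨ a (n + 1) = 0

noncomputable def sdD (t : ℝ) : ℤ := if |t| ≤ 2/3 then 0 else if 0 < t then 1 else -1

noncomputable def sdF (t : ℝ) : ℝ := 2 * (t - sdD t)

lemma sdD_mem (t : ℝ) : sdD t = -1 ∨ sdD t = 0 ∨ sdD t = 1 := by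
  unfold sdD; split_ifs <;> simp

lemma sdD_eq_zero {t : ℝ} (h : |t| ≤ 2/3) : sdD t = 0 := if_pos h

lemma sdF_bounds {t : ℝ} (h : |t| ≤ 4/3) :
    |sdF t| ≤ 4/3 ∧ (sdD t ≠ 0 → |sdF t| ≤ 2/3) := by
  rcases abs_le.1 h with ⟨h1, h2⟩
  unfold sdF sdD
  split_ifs with hs hp
  · rcases abs_le.1 hs with ⟨a1, a2⟩
    refine ⟨by rw [abs_le]; push_cast; constructor <;> linarith, fun hc => absurd rfl hc⟩
  · have ht : 2/3 < t := by
      rw [abs_le, not_and_or, not_le, not_le] at hs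
      rcases hs with h3 | h3 <;> linarith
    have : |2 * (t - ((1:ℤ):ℝ))| ≤ 2/3 := by
      rw [abs_le]; push_cast; constructor <;> linarith
    exact ⟨this.trans (by norm_num), fun _ => this⟩
  · have ht : t < -(2/3) := by
      rw [abs_le, not_and_or, not_le, not_le] at hs
      push_neg at hp
      rcases hs with h3 | h3 <;> linarith
    have : |2 * (t - ((-1:ℤ):ℝ))| ≤ 2/3 := by
      rw [abs_le]; push_cast; constructor <;> linarith
    exact ⟨this.trans (by norm_num), fun _ => this⟩

/-- Every real number has a non-adjacent signed digit expansion. -/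
theorem exists_nonAdjacent_signedDigitExpansion (x : ℝ) :
    ∃ a : ℤ → ℤ, IsSignedDigitExpansion a x ∧ NonAdjacent a := by
  obtain ⟨M, hM⟩ : ∃ M : ℕ, |x| ≤ 2 ^ M := by
    obtain ⟨M, hM⟩ := pow_unbounded_of_one_lt |x| (by norm_num : (1:ℝ) < 2)
    exact ⟨M, hM.le⟩
  set y : ℝ := x / 2 ^ M with hy
  set T : ℕ → ℝ := fun j => sdF^[j] y with hT
  have hT0 : T 0 = y := rfl
  have hTsucc : ∀ j, T (j + 1) = sdF (T j) := by
    intro j; simp only [hT, Function.iterate_succ_apply']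
  have habs : ∀ j, |T j| ≤ 4/3 := by
    intro j
    induction j with
    | zero =>
      rw [hT0, hy, abs_div, abs_pow, abs_two, div_le_iff₀ (by positivity)]
      calc |x| ≤ 2 ^ M := hM
        _ ≤ 4/3 * 2 ^ M := by nlinarith [pow_pos (show (0:ℝ) < 2 by norm_num) M]
    | succ j ih => rw [hTsucc]; exact (sdF_bounds ih).1
  -- the sequence of terms over ℕ
  set g : ℕ → ℝ := fun j => (sdD (T j) : ℝ) * 2 ^ ((M : ℤ) - j) with hg
  set u : ℕ → ℝ := fun j => T j * 2 ^ ((M : ℤ) - j) with hu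
  have h2ne : (2:ℝ) ≠ 0 := by norm_num
  have hgu : ∀ j, g j = u j - u (j + 1) := by
    intro j
    have hpow : (2:ℝ) ^ ((M : ℤ) - (j + 1 : ℕ)) * 2 = 2 ^ ((M : ℤ) - j) := by
      rw [← zpow_add_one₀ h2ne]
      congr 1; push_cast; ring
    simp only [hg, hu, hTsucc j, sdF]
    rw [← hpow]; ring
  have hsum_range : ∀ J, ∑ j ∈ Finset.range J, g j = x - u J := by
    intro J
    have := Finset.sum_range_sub' u J
    calc ∑ j ∈ Finset.range J, g j = ∑ j ∈ Finset.range J, (u j - u (j+1)) := by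
          exact Finset.sum_congr rfl fun j _ => hgu j
      _ = u 0 - u J := Finset.sum_range_sub' u J
      _ = x - u J := by
          congr 1
          simp only [hu, hT0, hy]
          rw [Nat.cast_zero, sub_zero, zpow_natCast]
          field_simp
  have hpow_eq : ∀ j : ℕ, (2:ℝ) ^ ((M:ℤ) - j) = 2 ^ M * (1/2) ^ j := by
    intro j
    rw [zpow_sub₀ h2ne, zpow_natCast, zpow_natCast, div_eq_mul_inv, one_div, inv_pow]
  have hu_tends : Filter.Tendsto u Filter.atTop (nhds 0) := by
    have hb : ∀ j, |u j| ≤ 4/3 * 2 ^ M * (1/2) ^ j := by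
      intro j
      simp only [hu]
      rw [abs_mul, abs_of_pos (show (0:ℝ) < 2 ^ ((M:ℤ) - (j:ℤ)) by positivity),
        hpow_eq j, mul_assoc]
      exact mul_le_mul_of_nonneg_right (habs j) (by positivity)
    have hlim : Filter.Tendsto (fun j : ℕ => 4/3 * 2 ^ M * (1/2:ℝ) ^ j)
        Filter.atTop (nhds 0) := by
      have := tendsto_pow_atTop_nhds_zero_of_lt_one
        (show (0:ℝ) ≤ 1/2 by norm_num) (show (1/2:ℝ) < 1 by norm_num)
      simpa using this.const_mul (4/3 * 2 ^ M : ℝ)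
    exact squeeze_zero_norm hb hlim
  have hDabs : ∀ j, |(sdD (T j) : ℝ)| ≤ 1 := by
    intro j
    rcases sdD_mem (T j) with h | h | h <;> rw [h] <;> norm_num
  have hgsummable : Summable g := by
    have hbd : ∀ j, |g j| ≤ 2 ^ M * (1/2:ℝ) ^ j := by
      intro j
      simp only [hg]
      rw [abs_mul, abs_of_pos (show (0:ℝ) < 2 ^ ((M:ℤ) - (j:ℤ)) by positivity),
        hpow_eq j]
      calc |(sdD (T j) : ℝ)| * (2^M * (1/2)^j) ≤ 1 * (2^M * (1/2)^j) :=
            mul_le_mul_of_nonneg_right (hDabs j) (by positivity)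
        _ = 2^M * (1/2)^j := one_mul _
    have hsb : Summable (fun j : ℕ => 2 ^ M * (1/2:ℝ) ^ j) :=
      (summable_geometric_of_lt_one (by norm_num) (by norm_num)).mul_left _
    exact Summable.of_abs (hsb.of_nonneg_of_le (fun j => abs_nonneg _) hbd)
  have hgsum : HasSum g x := by
    have h1 := hgsummable.hasSum
    have h2 := h1.tendsto_sum_nat
    have h3 : Filter.Tendsto (fun J => ∑ j ∈ Finset.range J, g j)
        Filter.atTop (nhds x) := by
      have : (fun J => ∑ j ∈ Finset.range J, g j) = fun J => x - u J := by
        funext J; exact hsum_range J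
      rw [this]
      simpa using (tendsto_const_nhds (x := x)).sub hu_tends
    rwa [tendsto_nhds_unique h2 h3] at h1
  -- define the expansion over ℤ
  set a : ℤ → ℤ := fun n => if 0 ≤ n + M then sdD (T (n + M).toNat) else 0 with ha
  set i : ℕ → ℤ := fun j => (j : ℤ) - M with hi
  have hinj : Function.Injective i := by
    intro j k h
    simp only [hi, sub_left_inj, Nat.cast_inj] at h
    exact h
  have hsupp : ∀ n ∉ Set.range i, (a n : ℝ) * (2:ℝ) ^ (-n) = 0 := by
    intro n hn
    have : ¬ 0 ≤ n + M := by
      intro hc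
      exact hn ⟨(n + M).toNat, by simp [hi, Int.toNat_of_nonneg hc]⟩
    simp [ha, this]
  have hcomp : (fun n : ℤ => (a n : ℝ) * (2:ℝ) ^ (-n)) ∘ i = g := by
    funext j
    have h1 : (0:ℤ) ≤ (j:ℤ) - M + M := by omega
    have h2 : ((j:ℤ) - M + M).toNat = j := by omega
    simp only [Function.comp_apply, hi, ha, hg, if_pos h1, h2]
    congr 1
    congr 1
    ring
  have hZsum : HasSum (fun n : ℤ => (a n : ℝ) * (2:ℝ) ^ (-n)) x := by
    rw [← hinj.hasSum_iff hsupp, hcomp]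
    exact hgsum
  refine ⟨a, ⟨?_, ⟨M + 1, ?_⟩, hZsum.summable, hZsum.tsum_eq.symm⟩, ?_⟩
  · intro n
    simp only [ha]
    split_ifs with h
    · exact sdD_mem _
    · right; left; rfl
  · intro n hn
    have : ¬ 0 ≤ n + M := by push_cast at hn ⊢; omega
    simp [ha, this]
  · intro n
    by_cases h : 0 ≤ n + M
    · by_cases hz : sdD (T (n + M).toNat) = 0
      · left; simp [ha, if_pos h, hz]
      · right
        have h1 : (0:ℤ) ≤ n + 1 + M := by omega
        have h2 : (n + 1 + M).toNat = (n + M).toNat + 1 := by omega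
        simp only [ha, if_pos h1, h2, hTsucc]
        exact sdD_eq_zero ((sdF_bounds (habs _)).2 hz)
    · left; simp [ha, h]
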